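/- arXiv:2603.27434 — 6 statements merged into one kernel-verified Lean document; each statement's English description precedes it below -/
import Mathlib

section
/- For every integer d ≥ 3 and every finite simple graph G on n ≥ 1 vertices with maximum degree at most d, the average energy of G satisfies ε(G) ≤ √(d−1) + 1/(d + √(d−1)). -/
/-!
The quartic `q(x) = ((d + s)² + 2s²) x² - x⁴ + s² d (d + 2s)`, `s = √(d - 1)`, dominates
`2s(d + s)² |x|` on `[-d, d]`, which contains the spectrum. Summing over the eigenvalues,
`∑ λ² = ∑ deg v` and `∑ λ⁴ = tr A⁴ ≥ ∑ (2 deg v² - deg v)` (closed walks of length 4), so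
`2s(d + s)² ∑ |λ|` is at most a sum over the vertices of a concave quadratic in `deg v` that is
increasing on `[0, d]`; its value at `d` gives the bound.
-/

open Matrix Polynomial Finset

theorem Polynomial.sum_comp_eq_of_prod_X_sub_C_eq {R M ι : Type*} [CommRing R] [IsDomain R]
    [AddCommMonoid M] [Fintype ι] {x y : ι → R}
    (h : ∏ i, (X - C (x i)) = ∏ i, (X - C (y i))) (f : R → M) :
    ∑ i, f (x i) = ∑ i, f (y i) := by
  have hroots : univ.val.map x = univ.val.map y := by
    simpa [roots_prod, prod_ne_zero_iff, X_sub_C_ne_zero] using congrArg roots h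
  simpa [Multiset.map_map] using congrArg (fun m => (m.map f).sum) hroots

theorem Matrix.IsHermitian.trace_pow_eq_sum_eigenvalues_pow {𝕜 n : Type*} [RCLike 𝕜] [Fintype n]
    [DecidableEq n] {A : Matrix n n 𝕜} (hA : A.IsHermitian) (k : ℕ) :
    (A ^ k).trace = ∑ i, (hA.eigenvalues i : 𝕜) ^ k := by
  conv_lhs => rw [hA.spectral_theorem, ← map_pow, Unitary.conjStarAlgAut_apply, trace_mul_cycle,
    Unitary.coe_star_mul_self, Matrix.one_mul, diagonal_pow, trace_diagonal]
  simp

theorem mul_self_add_sum_le_sum_mul_self_add {ι α : Type*} [Fintype ι] [DecidableEq ι]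
    [Semiring α] [PartialOrder α] [IsOrderedRing α] {x : ι → α} (hx : ∀ i, x i ≤ x i * x i)
    (j : ι) : x j * x j + ∑ i, x i ≤ ∑ i, x i * x i + x j := by
  rw [← add_sum_erase _ _ (mem_univ j), ← add_sum_erase _ (fun i => x i * x i) (mem_univ j),
    add_right_comm _ _ (x j), ← add_assoc]
  gcongr with i
  exact hx i

theorem Matrix.IsSymm.sum_diag_mul_self_add_sum_le {n α : Type*} [Fintype n] [DecidableEq n]
    [Semiring α] [PartialOrder α] [IsOrderedRing α] {B : Matrix n n α} (hB : B.IsSymm)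
    (hle : ∀ u v, B u v ≤ B u v * B u v) :
    ∑ v, B v v * B v v + ∑ u, ∑ v, B u v ≤ (B * B).trace + B.trace := by
  rw [← sum_add_distrib]
  calc _ ≤ ∑ v, (∑ u, B v u * B v u + B v v) :=
        sum_le_sum fun v _ => mul_self_add_sum_le_sum_mul_self_add (hle v) v
    _ = (B * B).trace + B.trace := by
        simp only [trace, Matrix.diag, mul_apply, sum_add_distrib, hB.apply]

namespace SimpleGraph

variable {V : Type*} [Fintype V] (G : SimpleGraph V) [DecidableRel G.Adj]

theorem sum_adjMatrix_apply {α : Type*} [NonAssocSemiring α] (v : V) :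
    ∑ w, G.adjMatrix α v w = G.degree v := by
  simpa [mulVec, dotProduct] using G.adjMatrix_mulVec_const_apply (a := (1 : α)) (v := v)

theorem trace_adjMatrix_sq [DecidableEq V] {α : Type*} [Semiring α] :
    (G.adjMatrix α ^ 2).trace = ∑ v, (G.degree v : α) := by
  simp only [trace, Matrix.diag, sq, adjMatrix_mul_self_apply_self]

theorem sum_adjMatrix_sq_apply [DecidableEq V] {α : Type*} [Semiring α] :
    ∑ u, ∑ v, (G.adjMatrix α ^ 2) u v = ∑ w, (G.degree w : α) ^ 2 := by
  have hcol : ∀ w, ∑ u, G.adjMatrix α u w = G.degree w := fun w => by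
    simpa only [G.isSymm_adjMatrix.apply] using G.sum_adjMatrix_apply w
  calc ∑ u, ∑ v, (G.adjMatrix α ^ 2) u v
      = ∑ w, (∑ u, G.adjMatrix α u w) * ∑ v, G.adjMatrix α w v := by
        simp_rw [sq, mul_apply, sum_mul_sum]
        exact (sum_congr rfl fun u _ => sum_comm).trans sum_comm
    _ = ∑ w, (G.degree w : α) ^ 2 := by simp only [hcol, sum_adjMatrix_apply, sq]

theorem two_mul_sum_degree_sq_le_trace_adjMatrix_pow_four_add [DecidableEq V] {α : Type*}
    [CommSemiring α] [PartialOrder α] [IsOrderedRing α] :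
    2 * ∑ v, (G.degree v : α) ^ 2 ≤ (G.adjMatrix α ^ 4).trace + ∑ v, (G.degree v : α) := by
  have hle : ∀ u v, (G.adjMatrix α ^ 2) u v ≤ (G.adjMatrix α ^ 2) u v * (G.adjMatrix α ^ 2) u v :=
    fun u v => by
      rw [adjMatrix_pow_apply_eq_card_walk, ← Nat.cast_mul]
      exact Nat.mono_cast (Nat.le_mul_self _)
  have h := (G.isSymm_adjMatrix.pow 2).sum_diag_mul_self_add_sum_le hle
  rw [← pow_add, trace_adjMatrix_sq, sum_adjMatrix_sq_apply] at h
  simpa only [sq, adjMatrix_mul_self_apply_self, two_mul] using h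

theorem abs_le_of_hasEigenvalue [DecidableEq V] {d : ℕ} (hdeg : ∀ v, G.degree v ≤ d) {r : ℝ}
    (hr : Module.End.HasEigenvalue (toLin' (G.adjMatrix ℝ)) r) : |r| ≤ d := by
  obtain ⟨k, hk⟩ := eigenvalue_mem_ball hr
  rw [Metric.mem_closedBall, adjMatrix_apply, if_neg (G.irrefl (v := k)), Real.dist_eq,
    sub_zero] at hk
  calc |r| ≤ ∑ j ∈ univ.erase k, ‖G.adjMatrix ℝ k j‖ := hk
    _ ≤ ∑ j, G.adjMatrix ℝ k j := by
      simp only [Real.norm_eq_abs, adjMatrix_apply, abs_ite, abs_one, abs_zero]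
      exact sum_le_sum_of_subset_of_nonneg (erase_subset _ _) fun _ _ _ => by positivity
    _ ≤ d := by rw [sum_adjMatrix_apply]; exact_mod_cast hdeg k

end SimpleGraph

/-- The quartic on the right touches the left side at `|x| = s` (doubly) and at `|x| = d`. -/
theorem mul_abs_le_quartic {d s x : ℝ} (hs : 0 ≤ s) (hx : |x| ≤ d) :
    2 * s * (d + s) ^ 2 * |x|
      ≤ ((d + s) ^ 2 + 2 * s ^ 2) * x ^ 2 - x ^ 4 + s ^ 2 * d * (d + 2 * s) := by
  have h : 0 ≤ (|x| - s) ^ 2 * (d - |x|) * (|x| + d + 2 * s) := by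
    have := abs_nonneg x
    apply mul_nonneg (mul_nonneg (sq_nonneg _) (by linarith)) (by linarith)
  rw [← sq_abs x, show x ^ 4 = (|x| ^ 2) ^ 2 by rw [sq_abs]; ring]
  linear_combination h

theorem quadratic_le_of_le_of_sq_eq {d s t : ℝ} (hd : 2 ≤ d) (hs0 : 0 ≤ s) (hs : s ^ 2 = d - 1)
    (htd : t ≤ d) :
    ((d + s) ^ 2 + 2 * s ^ 2 + 1) * t - 2 * t ^ 2 + s ^ 2 * d * (d + 2 * s)
      ≤ 2 * s * d * (d + s) * (s + 1) := by
  have h : 0 ≤ (d - t) * ((d + s) ^ 2 + 2 * s ^ 2 + 1 - 2 * d - 2 * t) := by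
    apply mul_nonneg (by linarith)
    nlinarith
  linear_combination h - d * (d - 1) * hs

theorem sum_abs_le_of_moments {ι : Type*} [Fintype ι] {d : ℝ} (hd : 2 ≤ d) {x t : ι → ℝ}
    (hx : ∀ i, |x i| ≤ d) (ht : ∀ i, t i ≤ d) (h2 : ∑ i, x i ^ 2 ≤ ∑ i, t i)
    (h4 : ∑ i, (2 * t i ^ 2 - t i) ≤ ∑ i, x i ^ 4) :
    ∑ i, |x i| ≤ (√(d - 1) + 1 / (d + √(d - 1))) * Fintype.card ι := by
  set s := √(d - 1)
  have hs_pos : 0 < s := Real.sqrt_pos.2 (by linarith)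
  have hs : s ^ 2 = d - 1 := Real.sq_sqrt (by linarith)
  have hpos : 0 < 2 * s * (d + s) ^ 2 := by positivity
  have hbound : s + 1 / (d + s) = 2 * s * d * (d + s) * (s + 1) / (2 * s * (d + s) ^ 2) := by
    field_simp
    linear_combination hs
  have hmoments : ∑ i, (((d + s) ^ 2 + 2 * s ^ 2) * x i ^ 2 - x i ^ 4)
      ≤ ∑ i, (((d + s) ^ 2 + 2 * s ^ 2 + 1) * t i - 2 * t i ^ 2) := by
    simp only [sum_sub_distrib, ← mul_sum, add_mul, one_mul, sum_add_distrib] at h4 ⊢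
    nlinarith
  rw [hbound, div_mul_eq_mul_div, le_div_iff₀ hpos, mul_comm, mul_sum]
  calc ∑ i, 2 * s * (d + s) ^ 2 * |x i|
      ≤ ∑ i, (((d + s) ^ 2 + 2 * s ^ 2) * x i ^ 2 - x i ^ 4 + s ^ 2 * d * (d + 2 * s)) :=
        sum_le_sum fun i _ => mul_abs_le_quartic hs_pos.le (hx i)
    _ ≤ ∑ i, (((d + s) ^ 2 + 2 * s ^ 2 + 1) * t i - 2 * t i ^ 2 + s ^ 2 * d * (d + 2 * s)) := by
        simp only [sum_add_distrib (g := fun _ => s ^ 2 * d * (d + 2 * s))]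
        linarith
    _ ≤ ∑ i : ι, 2 * s * d * (d + s) * (s + 1) :=
        sum_le_sum fun i _ => quadratic_le_of_le_of_sq_eq hd hs_pos.le hs (ht i)
    _ = 2 * s * d * (d + s) * (s + 1) * Fintype.card ι := by simp [mul_comm]

theorem average_energy_upper_bound_general
    (d n : ℕ) (hd : 3 ≤ d)
    (G : SimpleGraph (Fin n)) [DecidableRel G.Adj]
    (hdeg : ∀ v : Fin n, G.degree v ≤ d)
    (μ : Fin n → ℝ)
    (hchar : (G.adjMatrix ℝ).charpoly
      = ∏ i : Fin n, (Polynomial.X - Polynomial.C (μ i))) :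
    (1 / (n : ℝ)) * ∑ i : Fin n, |μ i|
      ≤ Real.sqrt ((d : ℝ) - 1) + 1 / ((d : ℝ) + Real.sqrt ((d : ℝ) - 1)) := by
  have hA := G.isHermitian_adjMatrix ℝ
  have htrace : ∀ k, ∑ i, μ i ^ k = (G.adjMatrix ℝ ^ k).trace := fun k => by
    rw [hA.trace_pow_eq_sum_eigenvalues_pow]
    exact sum_comp_eq_of_prod_X_sub_C_eq (hchar.symm.trans hA.charpoly_eq) (· ^ k)
  have hμ : ∀ i, |μ i| ≤ d := fun i => by
    refine G.abs_le_of_hasEigenvalue hdeg ?_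
    rw [Module.End.hasEigenvalue_iff_isRoot_charpoly, Matrix.charpoly_toLin', hchar]
    exact (isRoot_prod _ _ _).2 ⟨i, mem_univ i, root_X_sub_C.2 rfl⟩
  rw [one_div_mul_eq_div]
  refine div_le_of_le_mul₀ n.cast_nonneg (by positivity) ?_
  simpa using sum_abs_le_of_moments (by exact_mod_cast (by omega : 2 ≤ d)) hμ
    (t := fun v => (G.degree v : ℝ)) (fun v => by exact_mod_cast hdeg v)
    (by rw [htrace, G.trace_adjMatrix_sq]) (by
      rw [htrace, sum_sub_distrib, ← mul_sum]
      linarith [G.two_mul_sum_degree_sq_le_trace_adjMatrix_pow_four_add (α := ℝ)])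

/-- For every integer `d ≥ 3` and every finite simple graph `G` on `n ≥ 1`
vertices with maximum degree at most `d`, the average energy
`ε(G) = (1/n) · ∑ i, |λ i|` satisfies `ε(G) ≤ √(d-1) + 1/(d + √(d-1))`.
Here `μ : Fin n → ℝ` lists the eigenvalues of the adjacency matrix of `G`
(with multiplicity). -/
theorem average_energy_upper_bound
    (d n : ℕ) (hd : 3 ≤ d) (hn : 1 ≤ n)
    (G : SimpleGraph (Fin n)) [DecidableRel G.Adj]
    (hdeg : ∀ v : Fin n, G.degree v ≤ d)
    (μ : Fin n → ℝ)
    (hchar : (G.adjMatrix ℝ).charpoly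
      = ∏ i : Fin n, (Polynomial.X - Polynomial.C (μ i))) :
    (1 / (n : ℝ)) * ∑ i : Fin n, |μ i|
      ≤ Real.sqrt ((d : ℝ) - 1) + 1 / ((d : ℝ) + Real.sqrt ((d : ℝ) - 1)) :=
  average_energy_upper_bound_general d n hd G hdeg μ hchar
end

section
/- Let d ≥ 0 be a real number and let G be a finite simple graph on n ≥ 1 vertices with average degree at most d. Then the average energy of G equals √d if and only if either G has no edges and d = 0, or G is a perfect matching (every vertex has degree exactly 1) and d = 1. -/
/-!
By the spectral theorem, `∑ μᵢ² = tr (A²) = ∑ deg v ≤ d n`, so by Cauchy–Schwarz the average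
energy is at most `√d`, with equality exactly when `μᵢ² = d` for every eigenvalue. For the
symmetric matrix `A` this means `A² = d • 1`. Since `(A²)_{vv} = deg v` and `(A²)_{vw}` counts the
common neighbours of `v` and `w`, `A² = d • 1` says that all degrees equal `d` and no vertex has two
neighbours: either `d = 0` and `G` is empty, or `d = 1` and `G` is a perfect matching.
-/

open Polynomial Finset

lemma Real.sum_abs_eq_card_mul_sqrt_iff {ι : Type*} [Fintype ι] (x : ι → ℝ) {d : ℝ} (hd : 0 ≤ d)
    (hsq : ∑ i, x i ^ 2 ≤ Fintype.card ι * d) :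
    ∑ i, |x i| = Fintype.card ι * √d ↔ ∀ i, x i ^ 2 = d := by
  constructor
  · intro habs
    have hdev : ∑ i, (|x i| - √d) ^ 2 = ∑ i, x i ^ 2 - 2 * √d * ∑ i, |x i| + Fintype.card ι * d := by
      simp only [sub_sq, sq_abs, Real.sq_sqrt hd, sum_add_distrib, sum_sub_distrib, ← sum_mul,
        ← mul_sum, sum_const, card_univ, nsmul_eq_mul]
      ring
    have hzero := (sum_eq_zero_iff_of_nonneg fun i _ => sq_nonneg (|x i| - √d)).mp
      (le_antisymm (by rw [hdev, habs]; nlinarith [Real.mul_self_sqrt hd]) (by positivity))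
    intro i
    rw [← sq_abs, sub_eq_zero.mp (pow_eq_zero_iff two_ne_zero |>.mp (hzero i (mem_univ i))),
      Real.sq_sqrt hd]
  · intro hx
    simp [← Real.sqrt_sq_eq_abs, hx]

lemma Polynomial.roots_prod_X_sub_C_comp {R ι : Type*} [CommRing R] [IsDomain R] (s : Finset ι)
    (f : ι → R) : (∏ i ∈ s, (X - C (f i))).roots = s.val.map f := by
  rw [roots_prod _ _ (prod_ne_zero_iff.mpr fun i _ => X_sub_C_ne_zero (f i))]
  simp

lemma IsSelfAdjoint.mul_self_eq_algebraMap_iff {A : Type*} [Ring A] [StarRing A] [Algebra ℝ A]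
    [TopologicalSpace A] [ContinuousFunctionalCalculus ℝ A IsSelfAdjoint] {a : A}
    (ha : IsSelfAdjoint a) (c : ℝ) :
    a * a = algebraMap ℝ A c ↔ ∀ x ∈ spectrum ℝ a, x ^ 2 = c := by
  rw [← sq, ← cfc_pow_id (R := ℝ) a 2, ← cfc_const c a, cfc_eq_cfc_iff_eqOn]
  rfl

namespace Matrix

lemma eq_smul_one_iff {n R : Type*} [DecidableEq n] [MulZeroOneClass R] (M : Matrix n n R) (c : R) :
    M = c • 1 ↔ M.IsDiag ∧ ∀ i, M i i = c := by
  constructor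
  · rintro rfl
    exact ⟨isDiag_smul_one n c, by simp⟩
  · rintro ⟨hM, hc⟩
    ext i j
    rcases eq_or_ne i j with rfl | hij
    · simp [hc]
    · simp [hM hij, one_apply_ne hij]

variable {n : Type*} [Fintype n] [DecidableEq n]

lemma mem_spectrum_iff_mem_roots_charpoly {K : Type*} [Field K] (A : Matrix n n K) (x : K) :
    x ∈ spectrum K A ↔ x ∈ A.charpoly.roots := by
  rw [mem_spectrum_iff_isRoot_charpoly, mem_roots A.charpoly_monic.ne_zero]

lemma IsHermitian.trace_mul_self {A : Matrix n n ℝ} (hA : A.IsHermitian) :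
    (A * A).trace = (A.charpoly.roots.map (· ^ 2)).sum := by
  have hsq : cfc (· ^ 2 : ℝ → ℝ) A = A ^ 2 := cfc_pow_id A 2 hA.isSelfAdjoint
  rw [← sq, ← hsq, trace_eq_sum_roots_charpoly_of_splits, hA.charpoly_cfc_eq,
    hA.roots_charpoly_eq_eigenvalues, roots_prod_X_sub_C_comp]
  · simp [Multiset.map_map]
  · rw [hA.charpoly_cfc_eq]
    exact Splits.prod fun i _ => Splits.X_sub_C _

end Matrix

namespace SimpleGraph

variable {V R : Type*} [Fintype V] (G : SimpleGraph V) [DecidableRel G.Adj]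

lemma trace_adjMatrix_mul_self [NonAssocSemiring R] :
    (G.adjMatrix R * G.adjMatrix R).trace = ∑ v, (G.degree v : R) := by
  simp only [Matrix.trace, Matrix.diag, adjMatrix_mul_self_apply_self]

variable [DecidableEq V]

lemma adjMatrix_mul_self_apply [NonAssocSemiring R] (v w : V) :
    (G.adjMatrix R * G.adjMatrix R) v w = #(G.neighborFinset v ∩ G.neighborFinset w) := by
  simp only [adjMatrix_mul_apply, adjMatrix_apply, sum_boole]
  congr 2
  ext u
  simp [adj_comm]

lemma isDiag_adjMatrix_mul_self_iff [NonAssocSemiring R] [CharZero R] :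
    (G.adjMatrix R * G.adjMatrix R).IsDiag ↔ ∀ u, G.degree u ≤ 1 := by
  simp only [Matrix.IsDiag, Pairwise, adjMatrix_mul_self_apply, Nat.cast_eq_zero, card_eq_zero,
    ← card_neighborFinset_eq_degree, card_le_one, eq_empty_iff_forall_notMem, mem_inter,
    mem_neighborFinset]
  constructor
  · intro h u v huv w huw
    by_contra hvw
    exact h hvw u ⟨huv.symm, huw.symm⟩
  · intro h v w hvw u ⟨hvu, hwu⟩
    exact hvw (h u v hvu.symm w hwu.symm)

lemma adjMatrix_mul_self_eq_smul_one_iff [Nonempty V] [NonAssocSemiring R] [CharZero R] (c : R) :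
    G.adjMatrix R * G.adjMatrix R = c • 1 ↔
      ((∀ v w, ¬ G.Adj v w) ∧ c = 0) ∨ ((∀ v, G.degree v = 1) ∧ c = 1) := by
  rw [Matrix.eq_smul_one_iff, isDiag_adjMatrix_mul_self_iff]
  simp only [adjMatrix_mul_self_apply_self]
  obtain ⟨v₀⟩ := ‹Nonempty V›
  have hdeg_zero (v : V) : G.degree v = 0 ↔ ∀ w, ¬ G.Adj v w := by
    rw [← not_exists, ← degree_pos_iff_exists_adj, Nat.pos_iff_ne_zero, not_not]
  constructor
  · rintro ⟨hle, hdeg⟩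
    rcases Nat.le_one_iff_eq_zero_or_eq_one.mp (hle v₀) with h₀ | h₀
    · have hc : c = 0 := by rw [← hdeg v₀, h₀, Nat.cast_zero]
      exact .inl ⟨fun v => (hdeg_zero v).mp (by exact_mod_cast (hdeg v).trans hc), hc⟩
    · have hc : c = 1 := by rw [← hdeg v₀, h₀, Nat.cast_one]
      exact .inr ⟨fun v => by exact_mod_cast (hdeg v).trans hc, hc⟩
  · rintro (⟨hG, rfl⟩ | ⟨hG, rfl⟩)
    · simp [(hdeg_zero _).mpr (hG _)]
    · simp [hG]

end SimpleGraph

/-- **equality in McClelland's bound.** Let `d ≥ 0` be real and let `G` be a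
finite simple graph on `n ≥ 1` vertices with average degree at most `d`.  Then the average
energy of `G` equals `√d` if and only if either `G` has no edges and `d = 0`, or `G` is a
perfect matching (every vertex has degree exactly `1`) and `d = 1`.  Here `μ : Fin n → ℝ`
lists the eigenvalues of the adjacency matrix of `G` (with multiplicity). -/
theorem mcclelland_equality_characterization
    (d : ℝ) (hd : 0 ≤ d) (n : ℕ) (hn : 1 ≤ n)
    (G : SimpleGraph (Fin n)) [DecidableRel G.Adj]
    (havg : (∑ v : Fin n, (G.degree v : ℝ)) ≤ d * n)
    (μ : Fin n → ℝ)
    (hchar : (G.adjMatrix ℝ).charpoly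
      = ∏ i : Fin n, (Polynomial.X - Polynomial.C (μ i))) :
    (1 / (n : ℝ)) * ∑ i : Fin n, |μ i| = Real.sqrt d ↔
      ((∀ v w : Fin n, ¬ G.Adj v w) ∧ d = 0) ∨
        ((∀ v : Fin n, G.degree v = 1) ∧ d = 1) := by
  have hA : (G.adjMatrix ℝ).IsHermitian := G.isSymm_adjMatrix
  have hroots : (G.adjMatrix ℝ).charpoly.roots = univ.val.map μ := by
    rw [hchar, roots_prod_X_sub_C_comp]
  have hsq : ∑ i, μ i ^ 2 ≤ Fintype.card (Fin n) * d := by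
    calc ∑ i, μ i ^ 2 = ((G.adjMatrix ℝ).charpoly.roots.map (· ^ 2)).sum := by
          rw [hroots, Multiset.map_map]; rfl
      _ = ∑ v, (G.degree v : ℝ) := by rw [← hA.trace_mul_self, G.trace_adjMatrix_mul_self]
      _ ≤ Fintype.card (Fin n) * d := by rw [Fintype.card_fin, mul_comm]; exact havg
  have hspectrum : (∀ i, μ i ^ 2 = d) ↔ ∀ x ∈ spectrum ℝ (G.adjMatrix ℝ), x ^ 2 = d := by
    simp [Matrix.mem_spectrum_iff_mem_roots_charpoly, hroots]
  have hcauchy := Real.sum_abs_eq_card_mul_sqrt_iff μ hd hsq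
  rw [Fintype.card_fin] at hcauchy
  have : Nonempty (Fin n) := ⟨⟨0, hn⟩⟩
  have hn₀ : (n : ℝ) ≠ 0 := Nat.cast_ne_zero.mpr (by omega)
  rw [one_div_mul_eq_div, div_eq_iff hn₀, mul_comm, hcauchy, hspectrum,
    ← hA.isSelfAdjoint.mul_self_eq_algebraMap_iff, Algebra.algebraMap_eq_smul_one,
    G.adjMatrix_mul_self_eq_smul_one_iff]
end

section
/- Fix an integer d ≥ 75, set ε₀ = √(d−1) and ε₁ = √(d−1) + 1/(d + √(d−1)), and for δ ∈ (ε₀, d) define α(δ) = 2ε₀(d+ε₀)²/((d−δ)(d + 2ε₀ + δ)). Then there exists δ ∈ (ε₀, d) such that for all real ε, x, y, z satisfying ε₀ ≤ ε ≤ ε₁, x ≥ 1/2, 0 ≤ y ≤ 1/2 − z, and 0 ≤ z ≤ 1/(δ−ε₀)², one has (2ε₀)^{x+y+z} · ((ε₀+ε₁)/(2ε₀)) · (ε − ε₀)^x · (α(δ)·(ε₁−ε)/y)^{y/2} · (d − ε₀)^z < 1, where the factor (α(δ)·(ε₁−ε)/y)^{y/2} is interpreted as 1 when y = 0. -/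
/-!
Put `a = 2ε₀`, `u = ε − ε₀`, `v = ε₁ − ε`. Since `a (u + v) ≤ 1`, the factor `(a u)^x` is
largest at `x = 1/2`, and weighted AM-GM in `u` and `v / y` then removes `ε`, bounding the
product by `c · (m · K^y / (1+y)^(1+y))^(1/2) · R^z` with `c = (ε₀ + ε₁)/(2ε₀)`,
`m = a(ε₁ − ε₀)`, `K = a²α(δ)(ε₁ − ε₀)` and `R = a(d − ε₀)`. For `δ = ε₀ + 16` we get
`z ≤ 1/256`; since `y ↦ K^y / (1+y)^(1+y)` increases on `[0, 1/2]` and `K ≤ R²`, the worst case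
is `y = 127/256`, `z = 1/256`. What remains is a one-variable inequality in `s = ε₀ ≥ √74`;
raised to the power 512 it is checked on a subdivision of `[43/5, ∞)`, bounding each factor
monotonically on each piece.
-/

open Real

theorem rpow_self_add_le {t w K : ℝ} (ht : 0 < t) (hw : 0 ≤ w) (hK : exp 1 * (t + w) ≤ K) :
    (t + w) ^ (t + w) ≤ t ^ t * K ^ w := by
  have htw : 0 < t + w := by linarith
  have hK0 : 0 < K := lt_of_lt_of_le (by positivity) hK
  rw [← log_le_log_iff (by positivity) (by positivity), log_mul (by positivity) (by positivity),
    log_rpow htw, log_rpow ht, log_rpow hK0]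
  have hlog_ratio : t * (log (t + w) - log t) ≤ w := by
    rw [← log_div htw.ne' ht.ne']
    have := log_le_sub_one_of_pos (div_pos htw ht)
    calc t * log ((t + w) / t) ≤ t * ((t + w) / t - 1) := by gcongr
      _ = w := by field_simp; ring
  have hlog_K : 1 + log (t + w) ≤ log K := by
    rw [← log_exp 1, ← log_mul (exp_pos 1).ne' htw.ne']
    exact log_le_log (by positivity) hK
  nlinarith [mul_le_mul_of_nonneg_left hlog_K hw]

noncomputable def amgmProfile (K y : ℝ) : ℝ := K ^ y / (1 + y) ^ (1 + y)

theorem amgmProfile_nonneg {K y : ℝ} (hK : 0 ≤ K) (hy : -1 ≤ y) : 0 ≤ amgmProfile K y :=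
  div_nonneg (rpow_nonneg hK _) (rpow_nonneg (by linarith) _)

theorem amgmProfile_le_of_le {K y y' : ℝ} (hy : -1 < y) (hyy' : y ≤ y')
    (hK : exp 1 * (1 + y') ≤ K) : amgmProfile K y ≤ amgmProfile K y' := by
  have hK0 : 0 < K := lt_of_lt_of_le (mul_pos (exp_pos 1) (by linarith)) hK
  have key := rpow_self_add_le (t := 1 + y) (w := y' - y) (K := K) (by linarith) (by linarith)
    (by rwa [add_add_sub_cancel])
  rw [add_add_sub_cancel] at key
  unfold amgmProfile
  rw [div_le_div_iff₀ (rpow_pos_of_pos (by linarith) _) (rpow_pos_of_pos (by linarith) _)]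
  calc K ^ y * (1 + y') ^ (1 + y') ≤ K ^ y * ((1 + y) ^ (1 + y) * K ^ (y' - y)) := by gcongr
    _ = K ^ y' * (1 + y) ^ (1 + y) := by
      rw [mul_left_comm, ← rpow_add hK0, add_sub_cancel]; ring

theorem amgmProfile_le_mul_rpow_sub {K y₀ y : ℝ} (hK : 0 < K) (hy₀ : 0 ≤ y₀) (h : y₀ ≤ y) :
    amgmProfile K y ≤ amgmProfile K y₀ * K ^ (y - y₀) := by
  have hpow : (1 + y₀) ^ (1 + y₀) ≤ (1 + y) ^ (1 + y) :=
    calc (1 + y₀) ^ (1 + y₀) ≤ (1 + y) ^ (1 + y₀) := by gcongr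
      _ ≤ (1 + y) ^ (1 + y) := rpow_le_rpow_of_exponent_le (by linarith) (by linarith)
  unfold amgmProfile
  rw [div_mul_eq_mul_div, ← rpow_add hK, add_sub_cancel]
  gcongr

theorem amgmProfile_mul_rpow_le {K S y z y₀ ζ : ℝ} (hy : -1 < y) (hy₀ : 0 ≤ y₀)
    (hK : exp 1 * (1 + y₀) ≤ K) (hKS : K ≤ S) (hyz : y + z ≤ y₀ + ζ) (hzζ : z ≤ ζ) :
    amgmProfile K y * S ^ z ≤ amgmProfile K y₀ * S ^ ζ := by
  have hK1 : 1 ≤ K := le_trans (by nlinarith [add_one_le_exp 1]) hK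
  have hS1 : 1 ≤ S := hK1.trans hKS
  have hΦ := amgmProfile_nonneg (K := K) (by linarith) (show -1 ≤ y₀ by linarith)
  rcases le_total y y₀ with hyy₀ | hy₀y
  · gcongr
    exact amgmProfile_le_of_le hy hyy₀ hK
  · calc amgmProfile K y * S ^ z ≤ amgmProfile K y₀ * K ^ (y - y₀) * S ^ z := by
          gcongr; exact amgmProfile_le_mul_rpow_sub (by linarith) hy₀ hy₀y
      _ ≤ amgmProfile K y₀ * S ^ (y - y₀) * S ^ z := by gcongr
      _ = amgmProfile K y₀ * S ^ (y - y₀ + z) := by rw [mul_assoc, ← rpow_add (by linarith)]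
      _ ≤ amgmProfile K y₀ * S ^ ζ := by gcongr; linarith

theorem rpow_half_mul_div_rpow_le {u v y : ℝ} (hu : 0 ≤ u) (hv : 0 ≤ v) (hy : 0 ≤ y) :
    u ^ (1 / 2 : ℝ) * (v / y) ^ (y / 2) ≤ ((u + v) / (1 + y)) ^ ((1 + y) / 2) := by
  rcases hy.eq_or_lt with rfl | hy
  · simp only [zero_div, rpow_zero, mul_one, add_zero, div_one]
    gcongr
    linarith
  have h1y : 0 < 1 + y := by linarith
  have hvy : 0 ≤ v / y := div_nonneg hv hy.le
  have hamgm := geom_mean_le_arith_mean2_weighted (w₁ := 1 / (1 + y)) (w₂ := y / (1 + y))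
    (by positivity) (by positivity) hu hvy (by field_simp)
  have hmean : 1 / (1 + y) * u + y / (1 + y) * (v / y) = (u + v) / (1 + y) := by field_simp
  rw [hmean] at hamgm
  calc u ^ (1 / 2 : ℝ) * (v / y) ^ (y / 2)
      = (u ^ (1 / (1 + y)) * (v / y) ^ (y / (1 + y))) ^ ((1 + y) / 2) := by
        rw [mul_rpow (by positivity) (by positivity), ← rpow_mul hu, ← rpow_mul hvy]
        congr 2 <;> field_simp
    _ ≤ ((u + v) / (1 + y)) ^ ((1 + y) / 2) := by gcongr

theorem rpow_half_mul_rpow_mul_rpow_eq {a B W y : ℝ} (ha : 0 ≤ a) (hB : 0 ≤ B) (hW : 0 ≤ W)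
    (hy : 0 < 1 + y) :
    a ^ (1 / 2 : ℝ) * B ^ (y / 2) * (W / (1 + y)) ^ ((1 + y) / 2) =
      (a * W * amgmProfile (B * W) y) ^ (1 / 2 : ℝ) := by
  have hB_rpow : B ^ (y / 2) = (B ^ y) ^ (1 / 2 : ℝ) := by
    rw [← rpow_mul hB]; ring_nf
  have hW_rpow :
      (W / (1 + y)) ^ ((1 + y) / 2) = (W ^ (1 + y) / (1 + y) ^ (1 + y)) ^ (1 / 2 : ℝ) := by
    rw [← div_rpow hW hy.le, ← rpow_mul (div_nonneg hW hy.le)]; ring_nf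
  rw [hB_rpow, hW_rpow, ← mul_rpow ha (by positivity),
    ← mul_rpow (by positivity) (by positivity)]
  unfold amgmProfile
  rw [mul_rpow hB hW, rpow_add' hW hy.ne', rpow_one]
  congr 1
  ring

theorem rpow_mul_le_amgmProfile {a A D c u v x y z : ℝ} (ha : 0 < a) (hA : 0 ≤ A) (hD : 0 ≤ D)
    (hc : 0 ≤ c) (hu : 0 ≤ u) (hv : 0 ≤ v) (hauv : a * (u + v) ≤ 1) (hx : 1 / 2 ≤ x)
    (hy : 0 ≤ y) :
    a ^ (x + y + z) * c * u ^ x * (A * v / y) ^ (y / 2) * D ^ z ≤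
      c * (a * (u + v) * amgmProfile (a ^ 2 * A * (u + v)) y) ^ (1 / 2 : ℝ) * (a * D) ^ z := by
  have hvy : 0 ≤ v / y := div_nonneg hv hy
  have h1y : 0 < 1 + y := by linarith
  have hx_factor : (a * u) ^ x ≤ a ^ (1 / 2 : ℝ) * u ^ (1 / 2 : ℝ) := by
    rw [← mul_rpow ha.le hu]
    exact rpow_le_rpow_of_exponent_ge' (by positivity) (by nlinarith) (by norm_num) hx
  have hy_factor :
      a ^ y * (A * v / y) ^ (y / 2) = (a ^ 2 * A) ^ (y / 2) * (v / y) ^ (y / 2) := by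
    rw [mul_div_assoc, mul_rpow hA hvy, mul_rpow (by positivity) hA, ← rpow_natCast,
      ← rpow_mul ha.le]
    push_cast
    ring_nf
  calc a ^ (x + y + z) * c * u ^ x * (A * v / y) ^ (y / 2) * D ^ z
      = c * (a * u) ^ x * (a ^ y * (A * v / y) ^ (y / 2)) * (a * D) ^ z := by
        rw [rpow_add ha, rpow_add ha, mul_rpow ha.le hu, mul_rpow ha.le hD]; ring
    _ ≤ c * (a ^ (1 / 2 : ℝ) * u ^ (1 / 2 : ℝ)) *
        ((a ^ 2 * A) ^ (y / 2) * (v / y) ^ (y / 2)) * (a * D) ^ z := by rw [hy_factor]; gcongr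
    _ = c * (a ^ (1 / 2 : ℝ) * (a ^ 2 * A) ^ (y / 2)) *
        (u ^ (1 / 2 : ℝ) * (v / y) ^ (y / 2)) * (a * D) ^ z := by ring
    _ ≤ c * (a ^ (1 / 2 : ℝ) * (a ^ 2 * A) ^ (y / 2)) * ((u + v) / (1 + y)) ^ ((1 + y) / 2) *
        (a * D) ^ z := by gcongr; exact rpow_half_mul_div_rpow_le hu hv hy
    _ = _ := by
        rw [mul_assoc c, rpow_half_mul_rpow_mul_rpow_eq ha.le (by positivity) (by linarith) h1y]

namespace ProductBound

/- `prefactor`, `xBase`, `yBase`, `zBase` are `c`, `m`, `K`, `R` as functions of `s = ε₀`, with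
`d = s² + 1` and `δ = s + 16` (see `bases_eq`); `yBase` is written as a product of monotone
factors. -/

noncomputable def prefactor (s : ℝ) : ℝ := 1 + 1 / (2 * s * (s ^ 2 + s + 1))

noncomputable def xBase (s : ℝ) : ℝ := 2 * s / (s ^ 2 + s + 1)

noncomputable def yBase (s : ℝ) : ℝ :=
  8 * s * (s ^ 2 / (s ^ 2 - s - 15)) * ((s ^ 2 + s + 1) / (s ^ 2 + 3 * s + 17))

def zBase (s : ℝ) : ℝ := 2 * s * (s ^ 2 - s + 1)

/-- The 512th power of the bound at the worst case `y = 127/256`, `z = 1/256`. -/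
noncomputable def worstCasePow (s : ℝ) : ℝ :=
  (prefactor s ^ 2 * xBase s / (383 / 256)) ^ 256 * (yBase s / (383 / 256)) ^ 127 * zBase s ^ 2

variable {a b s : ℝ}

theorem bases_eq {d ε₁ : ℝ} (hs : 5 ≤ s) (hd : d = s ^ 2 + 1)
    (hε₁ : ε₁ = s + 1 / (d + s)) :
    (s + ε₁) / (2 * s) = prefactor s ∧ 2 * s * (ε₁ - s) = xBase s ∧
      (2 * s) ^ 2 * (2 * s * (d + s) ^ 2 / ((d - (s + 16)) * (d + 2 * s + (s + 16)))) *
        (ε₁ - s) = yBase s ∧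
      2 * s * (d - s) = zBase s := by
  subst hd hε₁
  have : 0 < s ^ 2 - s - 15 := by nlinarith
  have : 0 < s ^ 2 + s + 1 := by nlinarith
  have : 0 < s ^ 2 + 3 * s + 17 := by nlinarith
  refine ⟨?_, ?_, ?_, ?_⟩
  · unfold prefactor; field_simp; ring
  · unfold xBase; field_simp; ring
  · unfold yBase
    rw [show s ^ 2 + 1 - (s + 16) = s ^ 2 - s - 15 by ring,
      show s ^ 2 + 1 + 2 * s + (s + 16) = s ^ 2 + 3 * s + 17 by ring]
    field_simp
    ring
  · unfold zBase; ring

theorem prefactor_nonneg (hs : 0 ≤ s) : 0 ≤ prefactor s := by unfold prefactor; positivity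

theorem prefactor_le (ha : 0 < a) (has : a ≤ s) : prefactor s ≤ prefactor a := by
  have hs : 0 < s := ha.trans_le has
  unfold prefactor; gcongr

theorem xBase_nonneg (hs : 0 ≤ s) : 0 ≤ xBase s := by unfold xBase; positivity

theorem xBase_le_one : xBase s ≤ 1 := by
  unfold xBase
  rw [div_le_one (by nlinarith [sq_nonneg (s + 1 / 2)])]
  nlinarith [sq_nonneg (s - 1 / 2)]

theorem xBase_le (ha : 1 ≤ a) (has : a ≤ s) : xBase s ≤ xBase a := by
  have hs : 0 < s := by linarith
  have ha₀ : 0 < a := by linarith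
  unfold xBase
  rw [div_le_div_iff₀ (by positivity) (by positivity)]
  nlinarith [mul_nonneg (sub_nonneg.2 has) (by nlinarith : 0 ≤ a * s - 1)]

theorem xBase_le_two_div (hs : 0 < s) : xBase s ≤ 2 / s := by
  unfold xBase
  rw [div_le_div_iff₀ (by positivity) hs]
  nlinarith

theorem sq_div_le (ha : 5 ≤ a) (has : a ≤ s) :
    s ^ 2 / (s ^ 2 - s - 15) ≤ a ^ 2 / (a ^ 2 - a - 15) := by
  rw [div_le_div_iff₀ (by nlinarith) (by nlinarith)]
  nlinarith [mul_nonneg (sub_nonneg.2 has) (by nlinarith : 0 ≤ s * a + 15 * (s + a))]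

theorem quadratic_ratio_le (hs : 0 ≤ s) (hsb : s ≤ b) :
    (s ^ 2 + s + 1) / (s ^ 2 + 3 * s + 17) ≤ (b ^ 2 + b + 1) / (b ^ 2 + 3 * b + 17) := by
  rw [div_le_div_iff₀ (by positivity) (by nlinarith)]
  nlinarith [mul_nonneg (sub_nonneg.2 hsb) (by nlinarith : 0 ≤ 2 * b * s + 16 * (b + s) + 14)]

theorem quadratic_ratio_le_one (hs : 0 ≤ s) : (s ^ 2 + s + 1) / (s ^ 2 + 3 * s + 17) ≤ 1 :=
  (div_le_one (by positivity)).2 (by linarith)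

theorem yBase_nonneg (hs : 5 ≤ s) : 0 ≤ yBase s := by
  unfold yBase
  have : 0 < s ^ 2 - s - 15 := by nlinarith
  positivity

theorem four_mul_le_yBase (hs : 5 ≤ s) : 4 * s ≤ yBase s := by
  have hs0 : 0 < s := by linarith
  have hpos : 0 < s ^ 2 - s - 15 := by nlinarith
  have h₁ : 1 ≤ s ^ 2 / (s ^ 2 - s - 15) := (one_le_div hpos).2 (by linarith)
  have h₂ : 1 / 2 ≤ (s ^ 2 + s + 1) / (s ^ 2 + 3 * s + 17) := by
    rw [div_le_div_iff₀ (by norm_num) (by positivity)]; nlinarith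
  unfold yBase
  calc 4 * s = 8 * s * 1 * (1 / 2) := by ring
    _ ≤ _ := by gcongr

theorem yBase_le (ha : 5 ≤ a) (has : a ≤ s) (hsb : s ≤ b) :
    yBase s ≤ 8 * b * (a ^ 2 / (a ^ 2 - a - 15)) * ((b ^ 2 + b + 1) / (b ^ 2 + 3 * b + 17)) := by
  have hs : 0 < s := by linarith
  have hb : 0 < b := by linarith
  have : 0 < s ^ 2 - s - 15 := by nlinarith
  have : 0 < a ^ 2 - a - 15 := by nlinarith
  unfold yBase
  gcongr 8 * ?_ * ?_ * ?_
  · exact sq_div_le ha has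
  · exact quadratic_ratio_le hs.le hsb

theorem yBase_le_mul (ha : 5 ≤ a) (has : a ≤ s) :
    yBase s ≤ 8 * s * (a ^ 2 / (a ^ 2 - a - 15)) := by
  have hs : 0 < s := by linarith
  have : 0 < s ^ 2 - s - 15 := by nlinarith
  have : 0 < a ^ 2 - a - 15 := by nlinarith
  unfold yBase
  calc _ ≤ 8 * s * (a ^ 2 / (a ^ 2 - a - 15)) * 1 := by
        gcongr 8 * s * ?_ * ?_
        · exact sq_div_le ha has
        · exact quadratic_ratio_le_one hs.le
    _ = _ := mul_one _

theorem zBase_nonneg (hs : 0 ≤ s) : 0 ≤ zBase s := by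
  unfold zBase; nlinarith [sq_nonneg (s - 1)]

theorem zBase_le (hsb : s ≤ b) : zBase s ≤ zBase b := by
  unfold zBase
  nlinarith [mul_nonneg (sub_nonneg.2 hsb) (add_nonneg (sq_nonneg (b + s - 1))
    (add_nonneg (sq_nonneg (b - 1)) (sq_nonneg (s - 1))))]

theorem zBase_le_two_mul_pow (hs : 1 ≤ s) : zBase s ≤ 2 * s ^ 3 := by
  unfold zBase; nlinarith

theorem yBase_le_zBase_sq (hs : 43 / 5 ≤ s) : yBase s ≤ zBase s ^ 2 := by
  refine (yBase_le_mul le_rfl (by linarith)).trans ?_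
  have h : 20 ≤ s ^ 2 - s + 1 := by nlinarith
  rw [show (5 : ℝ) ^ 2 / (5 ^ 2 - 5 - 15) = 5 by norm_num]
  unfold zBase
  nlinarith [mul_le_mul h h (by norm_num) (by linarith)]

theorem worstCasePow_le_of_mem_Icc (ha : 5 ≤ a) (has : a ≤ s) (hsb : s ≤ b) :
    worstCasePow s ≤ (prefactor a ^ 2 * xBase a / (383 / 256)) ^ 256 *
      (8 * b * (a ^ 2 / (a ^ 2 - a - 15)) * ((b ^ 2 + b + 1) / (b ^ 2 + 3 * b + 17)) / (383 / 256))
        ^ 127 * zBase b ^ 2 := by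
  have hy := yBase_le ha has hsb
  have := prefactor_nonneg (s := s) (by linarith)
  have := xBase_nonneg (s := s) (by linarith)
  have := zBase_nonneg (s := s) (by linarith)
  have hy₀ := yBase_nonneg (s := s) (by linarith)
  have := hy₀.trans hy
  unfold worstCasePow
  gcongr (?_ ^ 2 * ?_ / _) ^ 256 * (?_ / _) ^ 127 * ?_ ^ 2
  · exact prefactor_le (by linarith) has
  · exact xBase_le (by linarith) has
  · exact zBase_le hsb

theorem worstCasePow_le_of_le (ha : 5 ≤ a) (has : a ≤ s) :
    worstCasePow s ≤ (prefactor a ^ 2 * 2 / (383 / 256)) ^ 256 *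
      (8 * (a ^ 2 / (a ^ 2 - a - 15)) / (383 / 256)) ^ 127 * 4 / a ^ 123 := by
  have hs : 0 < s := by linarith
  have := prefactor_nonneg hs.le
  have := xBase_nonneg hs.le
  have := yBase_nonneg (s := s) (by linarith)
  have := zBase_nonneg hs.le
  have : 0 < a ^ 2 - a - 15 := by nlinarith
  calc worstCasePow s ≤ (prefactor a ^ 2 * (2 / s) / (383 / 256)) ^ 256 *
        (8 * s * (a ^ 2 / (a ^ 2 - a - 15)) / (383 / 256)) ^ 127 * (2 * s ^ 3) ^ 2 := by
        unfold worstCasePow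
        gcongr (?_ ^ 2 * ?_ / _) ^ 256 * (?_ / _) ^ 127 * ?_ ^ 2
        · exact prefactor_le (by linarith) has
        · exact xBase_le_two_div hs
        · exact yBase_le_mul ha has
        · exact zBase_le_two_mul_pow (by linarith)
    _ = (prefactor a ^ 2 * 2 / (383 / 256)) ^ 256 *
        (8 * (a ^ 2 / (a ^ 2 - a - 15)) / (383 / 256)) ^ 127 * 4 / s ^ 123 := by
        generalize prefactor a = p
        generalize a ^ 2 / (a ^ 2 - a - 15) = κ
        field_simp
        ring
    _ ≤ _ := by
        have := prefactor_nonneg (s := a) (by linarith)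
        gcongr

-- `worstCasePow` is closest to `1` at `s = √74` (about `0.42`), hence the short first intervals.
theorem worstCasePow_lt_one (hs : 43 / 5 ≤ s) : worstCasePow s < 1 := by
  rcases le_total s (863 / 100) with h₁ | h₁
  · exact (worstCasePow_le_of_mem_Icc (by norm_num) hs h₁).trans_lt
      (by norm_num [prefactor, xBase, zBase])
  rcases le_total s (869 / 100) with h₂ | h₂
  · exact (worstCasePow_le_of_mem_Icc (by norm_num) h₁ h₂).trans_lt
      (by norm_num [prefactor, xBase, zBase])
  rcases le_total s (879 / 100) with h₃ | h₃
  · exact (worstCasePow_le_of_mem_Icc (by norm_num) h₂ h₃).trans_lt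
      (by norm_num [prefactor, xBase, zBase])
  rcases le_total s (897 / 100) with h₄ | h₄
  · exact (worstCasePow_le_of_mem_Icc (by norm_num) h₃ h₄).trans_lt
      (by norm_num [prefactor, xBase, zBase])
  rcases le_total s (93 / 10) with h₅ | h₅
  · exact (worstCasePow_le_of_mem_Icc (by norm_num) h₄ h₅).trans_lt
      (by norm_num [prefactor, xBase, zBase])
  rcases le_total s (99 / 10) with h₆ | h₆
  · exact (worstCasePow_le_of_mem_Icc (by norm_num) h₅ h₆).trans_lt
      (by norm_num [prefactor, xBase, zBase])
  rcases le_total s 11 with h₇ | h₇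
  · exact (worstCasePow_le_of_mem_Icc (by norm_num) h₆ h₇).trans_lt
      (by norm_num [prefactor, xBase, zBase])
  rcases le_total s 13 with h₈ | h₈
  · exact (worstCasePow_le_of_mem_Icc (by norm_num) h₇ h₈).trans_lt
      (by norm_num [prefactor, xBase, zBase])
  · exact (worstCasePow_le_of_le (by norm_num) h₈).trans_lt (by norm_num [prefactor])

theorem worstCase_pow_eq (hs : 5 ≤ s) :
    (prefactor s * (xBase s * (amgmProfile (yBase s) (127 / 256) *
      (zBase s ^ 2) ^ (1 / 256 : ℝ))) ^ (1 / 2 : ℝ)) ^ 512 = worstCasePow s := by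
  have hK := yBase_nonneg hs
  have := xBase_nonneg (s := s) (by linarith)
  have := amgmProfile_nonneg hK (y := 127 / 256) (by norm_num)
  have hΦ_pow : amgmProfile (yBase s) (127 / 256) ^ 256 = yBase s ^ 127 / (383 / 256) ^ 383 := by
    unfold amgmProfile
    rw [div_pow, ← rpow_natCast (yBase s ^ _), ← rpow_mul hK,
      ← rpow_natCast ((1 + 127 / 256 : ℝ) ^ _), ← rpow_mul (by norm_num)]
    norm_num
  have hR_pow : ((zBase s ^ 2) ^ (1 / 256 : ℝ)) ^ 256 = zBase s ^ 2 := by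
    rw [← rpow_natCast, ← rpow_mul (by positivity)]
    norm_num
  rw [show 512 = 2 * 256 by norm_num, pow_mul, mul_pow, ← rpow_natCast (_ ^ (1 / 2 : ℝ)) 2,
    ← rpow_mul (by positivity), show (1 / 2 : ℝ) * (2 : ℕ) = 1 by norm_num, rpow_one]
  rw [mul_pow, mul_pow, mul_pow, hΦ_pow, hR_pow,
    show (383 / 256 : ℝ) ^ 383 = (383 / 256) ^ 256 * (383 / 256) ^ 127 by rw [← pow_add]]
  unfold worstCasePow
  generalize (383 / 256 : ℝ) = r
  ring

theorem prefactor_mul_rpow_lt_one {y z : ℝ} (hs : 43 / 5 ≤ s) (hy : 0 ≤ y)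
    (hyz : y + z ≤ 1 / 2) (hz : z ≤ 1 / 256) :
    prefactor s * (xBase s * amgmProfile (yBase s) y) ^ (1 / 2 : ℝ) * zBase s ^ z < 1 := by
  have hs0 : 0 < s := by linarith
  have := prefactor_nonneg hs0.le
  have hm := xBase_nonneg hs0.le
  have hR := zBase_nonneg hs0.le
  have hK₀ := yBase_nonneg (s := s) (by linarith)
  have hΦ := amgmProfile_nonneg hK₀ (y := y) (by linarith)
  have hΦ₀ := amgmProfile_nonneg hK₀ (y := 127 / 256) (by norm_num)
  have hK : exp 1 * (1 + 127 / 256) ≤ yBase s := by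
    nlinarith [four_mul_le_yBase (s := s) (by linarith), exp_one_lt_d9]
  have hR_half : ((zBase s ^ 2) ^ z) ^ (1 / 2 : ℝ) = zBase s ^ z := by
    rw [← rpow_two, ← rpow_mul hR, ← rpow_mul hR]
    ring_nf
  calc prefactor s * (xBase s * amgmProfile (yBase s) y) ^ (1 / 2 : ℝ) * zBase s ^ z
      = prefactor s * (xBase s * (amgmProfile (yBase s) y * (zBase s ^ 2) ^ z)) ^ (1 / 2 : ℝ) := by
        rw [← mul_assoc (xBase s), mul_rpow (mul_nonneg hm hΦ) (by positivity), hR_half,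
          mul_assoc]
    _ ≤ prefactor s * (xBase s * (amgmProfile (yBase s) (127 / 256) *
        (zBase s ^ 2) ^ (1 / 256 : ℝ))) ^ (1 / 2 : ℝ) := by
        gcongr prefactor s * (xBase s * ?_) ^ (1 / 2 : ℝ)
        exact amgmProfile_mul_rpow_le (y := y) (by linarith) (by norm_num) hK
          (yBase_le_zBase_sq hs) (by linarith) hz
    _ < 1 := by
        refine (pow_lt_one_iff_of_nonneg (by positivity) (show 512 ≠ 0 by norm_num)).1 ?_
        rw [worstCase_pow_eq (by linarith)]
        exact worstCasePow_lt_one hs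

end ProductBound

open ProductBound in
/-- **optimization.** Fix an integer `d ≥ 75`, set `ε₀ = √(d−1)` and
`ε₁ = √(d−1) + 1/(d + √(d−1))`, and for `δ ∈ (ε₀, d)` define
`α(δ) = 2ε₀(d+ε₀)²/((d−δ)(d + 2ε₀ + δ))`.  Then there exists `δ ∈ (ε₀, d)` such that for
all real `ε, x, y, z` with `ε₀ ≤ ε ≤ ε₁`, `x ≥ 1/2`, `0 ≤ y ≤ 1/2 − z`, and
`0 ≤ z ≤ 1/(δ−ε₀)²`, one has
`(2ε₀)^(x+y+z) · ((ε₀+ε₁)/(2ε₀)) · (ε − ε₀)^x · (α(δ)(ε₁−ε)/y)^(y/2) · (d − ε₀)^z < 1`.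
The powers with real exponents are `Real.rpow`; for `y = 0` the factor
`(α(δ)(ε₁−ε)/y)^(y/2)` equals `1` (indeed `Real.rpow _ 0 = 1`), matching the stated
convention. -/
theorem optimization_product_bound
    (d : ℕ) (hd : 75 ≤ d)
    (ε₀ ε₁ : ℝ)
    (hε₀ : ε₀ = Real.sqrt ((d : ℝ) - 1))
    (hε₁ : ε₁ = Real.sqrt ((d : ℝ) - 1) + 1 / ((d : ℝ) + Real.sqrt ((d : ℝ) - 1))) :
    ∃ δ : ℝ, ε₀ < δ ∧ δ < (d : ℝ) ∧
      ∀ ε x y z : ℝ,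
        ε₀ ≤ ε → ε ≤ ε₁ → (1 : ℝ) / 2 ≤ x → 0 ≤ y → y ≤ 1 / 2 - z →
        0 ≤ z → z ≤ 1 / (δ - ε₀) ^ 2 →
        (2 * ε₀) ^ (x + y + z) * ((ε₀ + ε₁) / (2 * ε₀)) * (ε - ε₀) ^ x *
            ((2 * ε₀ * ((d : ℝ) + ε₀) ^ 2 / (((d : ℝ) - δ) * ((d : ℝ) + 2 * ε₀ + δ))
              * (ε₁ - ε)) / y) ^ (y / 2) *
            ((d : ℝ) - ε₀) ^ z
          < 1 := by
  have hd' : (75 : ℝ) ≤ d := by exact_mod_cast hd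
  have hs : 43 / 5 ≤ ε₀ := by rw [hε₀, le_sqrt' (by norm_num)]; linarith
  have hd_eq : (d : ℝ) = ε₀ ^ 2 + 1 := by rw [hε₀, sq_sqrt (by linarith)]; ring
  rw [← hε₀] at hε₁
  obtain ⟨hc, hm, hK, hR⟩ := bases_eq (by linarith) hd_eq hε₁
  refine ⟨ε₀ + 16, by linarith, by nlinarith, ?_⟩
  intro ε x y z hε hε' hx hy hyz _ hzδ
  have hz : z ≤ 1 / 256 := by norm_num at hzδ; linarith
  have hδ : 0 < (d : ℝ) - (ε₀ + 16) := by nlinarith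
  refine (rpow_mul_le_amgmProfile (by linarith) (by positivity) (by nlinarith)
    (hc ▸ prefactor_nonneg (by linarith)) (sub_nonneg.2 hε) (sub_nonneg.2 hε')
    (by rw [sub_add_sub_cancel', hm]; exact xBase_le_one) hx hy).trans_lt ?_
  rw [sub_add_sub_cancel', hc, hm, hK, hR]
  exact prefactor_mul_rpow_lt_one hs hy (by linarith) hz
end

section
/- Let A be an n×n symmetric matrix with integer entries and real eigenvalues λ_1, …, λ_n (with multiplicity), let m be an integer, and let I = { i : λ_i² ≠ m }. Then the product ∏_{i ∈ I} (m − λ_i²) is a nonzero integer; in particular, ∏_{i ∈ I} |m − λ_i²| ≥ 1 (where an empty product is 1). -/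
open Polynomial Matrix

lemma myEvalCharpoly {n : ℕ} (M : Matrix (Fin n) (Fin n) ℝ) (t : ℝ) :
    M.charpoly.eval t = (t • (1 : Matrix (Fin n) (Fin n) ℝ) - M).det := by
  rw [Matrix.charpoly, ← Polynomial.coe_evalRingHom, RingHom.map_det]
  congr 1
  ext i j
  by_cases h : i = j <;>
    simp [Matrix.charmatrix_apply, Matrix.diagonal_apply, h, Matrix.one_apply,
      Matrix.smul_apply, Matrix.sub_apply]

/-- Let `A` be an `n × n` symmetric matrix with integer entries whose real
eigenvalues (with multiplicity) are `μ 1, …, μ n`, encoded by the factorization of the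
characteristic polynomial of `A` over `ℝ`.  Let `m` be an integer and let
`I = {i : (μ i)² ≠ m}`.  Then `∏ i ∈ I, (m − (μ i)²)` is a nonzero integer; in particular,
`∏ i ∈ I, |m − (μ i)²| ≥ 1`. -/
theorem integral_product_m_minus_sq
    (n : ℕ) (A : Matrix (Fin n) (Fin n) ℤ) (hA : A.IsSymm)
    (μ : Fin n → ℝ)
    (hchar : (A.map (fun a : ℤ => (a : ℝ))).charpoly
      = ∏ i : Fin n, (Polynomial.X - Polynomial.C (μ i)))
    (m : ℤ) :
    (∃ k : ℤ, k ≠ 0 ∧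
        (k : ℝ) = ∏ i ∈ Finset.univ.filter (fun i : Fin n => (μ i) ^ 2 ≠ (m : ℝ)),
          ((m : ℝ) - (μ i) ^ 2)) ∧
      1 ≤ ∏ i ∈ Finset.univ.filter (fun i : Fin n => (μ i) ^ 2 ≠ (m : ℝ)),
          |(m : ℝ) - (μ i) ^ 2| := by
  classical
  set A' : Matrix (Fin n) (Fin n) ℝ := A.map (fun a : ℤ => (a : ℝ)) with hA'
  have hA'' : A' = A.map (Int.castRingHom ℝ) := rfl
  set q : Polynomial ℤ := (A * A).charpoly with hqdef
  -- q maps to ∏ (X - C (μ i ^ 2))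
  have key : ∀ t : ℝ, (q.map (Int.castRingHom ℝ)).eval (t ^ 2)
      = (∏ i : Fin n, (X - C (μ i ^ 2))).eval (t ^ 2) := by
    intro t
    have h1 : q.map (Int.castRingHom ℝ) = (A' * A').charpoly := by
      rw [hqdef, ← Matrix.charpoly_map, hA'', Matrix.map_mul]
    have hfac : t ^ 2 • (1 : Matrix (Fin n) (Fin n) ℝ) - A' * A'
        = (t • 1 - A') * (t • 1 + A') := by
      rw [sub_mul, mul_add, mul_add, smul_mul_smul_comm, one_mul, mul_smul_comm,
        smul_mul_assoc, one_mul, mul_one]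
      rw [pow_two]
      abel
    have e2 : (t • (1 : Matrix (Fin n) (Fin n) ℝ) - A').det = ∏ i, (t - μ i) := by
      rw [← myEvalCharpoly, hchar]
      simp [eval_prod]
    have e3 : (t • (1 : Matrix (Fin n) (Fin n) ℝ) + A').det = ∏ i, (t + μ i) := by
      have hneg : t • (1 : Matrix (Fin n) (Fin n) ℝ) + A'
          = (-1 : ℝ) • ((-t) • 1 - A') := by
        rw [smul_sub, smul_smul]
        simp
      rw [hneg, Matrix.det_smul, ← myEvalCharpoly, hchar]
      simp only [eval_prod, eval_sub, eval_X, eval_C, Fintype.card_fin]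
      have hp : (∏ x : Fin n, (-t - μ x)) = (-1 : ℝ) ^ n * ∏ x : Fin n, (t + μ x) := by
        calc (∏ x : Fin n, (-t - μ x)) = ∏ x : Fin n, (-1 : ℝ) * (t + μ x) :=
              Finset.prod_congr rfl (fun i _ => by ring)
          _ = (-1 : ℝ) ^ n * ∏ x : Fin n, (t + μ x) := by
              rw [Finset.prod_mul_distrib, Finset.prod_const, Finset.card_univ,
                Fintype.card_fin]
      rw [hp, ← mul_assoc, ← pow_add, ← two_mul, pow_mul]
      norm_num
    rw [h1, myEvalCharpoly, hfac, Matrix.det_mul, e2, e3]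
    simp only [eval_prod, eval_sub, eval_X, eval_C]
    rw [← Finset.prod_mul_distrib]
    congr 1; ext i; ring
  have hq : q.map (Int.castRingHom ℝ) = ∏ i : Fin n, (X - C (μ i ^ 2)) := by
    apply Polynomial.eq_of_infinite_eval_eq
    apply Set.Infinite.mono _ (Set.Ici_infinite (0 : ℝ))
    intro x hx
    have hx' : x = (Real.sqrt x) ^ 2 := (Real.sq_sqrt hx).symm
    simpa [Set.mem_setOf_eq, ← hx'] using key (Real.sqrt x)
  set I := Finset.univ.filter (fun i : Fin n => (μ i) ^ 2 ≠ (m : ℝ)) with hIdef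
  set J := Finset.univ.filter (fun i : Fin n => (μ i) ^ 2 = (m : ℝ)) with hJdef
  have hsplit : (∏ i : Fin n, (X - C (μ i ^ 2)))
      = (X - C ((m : ℤ) : ℝ)) ^ J.card * ∏ i ∈ I, (X - C (μ i ^ 2)) := by
    rw [← Finset.prod_filter_mul_prod_filter_not Finset.univ
      (fun i : Fin n => (μ i) ^ 2 = (m : ℝ))]
    congr 1
    rw [← Finset.prod_const]
    apply Finset.prod_congr rfl
    intro i hi
    rw [Finset.mem_filter] at hi
    rw [hi.2]
  have hdvd : (X - C m) ^ J.card ∣ q := by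
    rw [← Polynomial.map_dvd_map (Int.castRingHom ℝ) Int.cast_injective
      ((monic_X_sub_C m).pow J.card)]
    rw [Polynomial.map_pow, Polynomial.map_sub, map_X, map_C, hq, hsplit]
    exact Dvd.intro _ rfl
  obtain ⟨s, hs⟩ := hdvd
  have hsmap : s.map (Int.castRingHom ℝ) = ∏ i ∈ I, (X - C (μ i ^ 2)) := by
    have h2 := congrArg (Polynomial.map (Int.castRingHom ℝ)) hs
    rw [Polynomial.map_mul, Polynomial.map_pow, Polynomial.map_sub, map_X, map_C,
      hq, hsplit] at h2
    exact (mul_left_cancel₀ (pow_ne_zero _ (X_sub_C_ne_zero _)) h2).symm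
  have hk : ((s.eval m : ℤ) : ℝ) = ∏ i ∈ I, ((m : ℝ) - (μ i) ^ 2) := by
    have h3 : ((s.eval m : ℤ) : ℝ)
        = (s.map (Int.castRingHom ℝ)).eval ((Int.castRingHom ℝ) m) := by
      rw [Polynomial.eval_map, Polynomial.eval₂_hom]
      simp
    rw [h3, hsmap, eval_prod]
    simp
  have hne : ∀ i ∈ I, (m : ℝ) - (μ i) ^ 2 ≠ 0 := by
    intro i hi
    rw [hIdef, Finset.mem_filter] at hi
    exact sub_ne_zero.mpr (Ne.symm hi.2)
  have hk0 : s.eval m ≠ 0 := by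
    intro h
    rw [h] at hk
    exact (Finset.prod_ne_zero_iff.mpr hne) (by exact_mod_cast hk.symm)
  refine ⟨⟨s.eval m, hk0, hk⟩, ?_⟩
  rw [← Finset.abs_prod, ← hk, ← Int.cast_abs]
  exact_mod_cast Int.one_le_abs hk0
end

section
/- Let A be an n×n symmetric matrix with integer entries and real eigenvalues λ_1, …, λ_n (with multiplicity), let c be an integer, and let I = { i : λ_i ≠ −c }. Then the product ∏_{i ∈ I} (c + λ_i) is a nonzero integer; in particular, ∏_{i ∈ I} |c + λ_i| ≥ 1 (where an empty product is 1). -/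
open Polynomial Finset

/-- Let `A` be an `n × n` symmetric matrix with integer entries whose real
eigenvalues (with multiplicity) are `μ 1, …, μ n`, encoded by the factorization of the
characteristic polynomial of `A` over `ℝ`.  Let `c` be an integer and let
`I = {i : μ i ≠ −c}`.  Then `∏ i ∈ I, (c + μ i)` is a nonzero integer; in particular,
`∏ i ∈ I, |c + μ i| ≥ 1`. -/
theorem integral_product_c_plus_eigenvalue
    (n : ℕ) (A : Matrix (Fin n) (Fin n) ℤ) (hA : A.IsSymm)
    (μ : Fin n → ℝ)
    (hchar : (A.map (fun a : ℤ => (a : ℝ))).charpoly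
      = ∏ i : Fin n, (Polynomial.X - Polynomial.C (μ i)))
    (c : ℤ) :
    (∃ k : ℤ, k ≠ 0 ∧
        (k : ℝ) = ∏ i ∈ Finset.univ.filter (fun i : Fin n => μ i ≠ -(c : ℝ)),
          ((c : ℝ) + μ i)) ∧
      1 ≤ ∏ i ∈ Finset.univ.filter (fun i : Fin n => μ i ≠ -(c : ℝ)),
          |(c : ℝ) + μ i| := by
  classical
  set I : Finset (Fin n) := Finset.univ.filter (fun i : Fin n => μ i ≠ -(c : ℝ)) with hI
  have hp0 : A.charpoly ≠ 0 := A.charpoly_monic.ne_zero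
  obtain ⟨q, hq, hqnd⟩ := A.charpoly.exists_eq_pow_rootMultiplicity_mul_and_not_dvd hp0 (-c)
  set m := Polynomial.rootMultiplicity (-c) A.charpoly with hm
  have hqe : q.eval (-c) ≠ 0 := fun h => hqnd (Polynomial.dvd_iff_isRoot.mpr h)
  have hmap : (A.charpoly).map (Int.castRingHom ℝ)
      = ∏ i : Fin n, (Polynomial.X - Polynomial.C (μ i)) := by
    rw [← Matrix.charpoly_map]; exact hchar
  set a : ℝ := -(c : ℝ) with ha
  have hqmap : (∏ i : Fin n, (X - C (μ i)))
      = (X - C a) ^ m * q.map (Int.castRingHom ℝ) := by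
    rw [← hmap, hq]
    simp [Polynomial.map_mul, Polynomial.map_pow, Polynomial.map_sub, ha]
  have hsplit : (∏ i : Fin n, (X - C (μ i)))
      = (X - C a) ^ (Finset.univ.filter (fun i : Fin n => ¬ μ i ≠ -(c : ℝ))).card
        * ∏ i ∈ I, (X - C (μ i)) := by
    rw [← Finset.prod_filter_mul_prod_filter_not Finset.univ
      (fun i : Fin n => μ i ≠ -(c : ℝ)), mul_comm]
    congr 1
    rw [Finset.prod_congr rfl (fun i hi => ?_), Finset.prod_const]
    simp only [Finset.mem_filter, not_not] at hi
    rw [hi.2]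
  have hIne : (∏ i ∈ I, (X - C (μ i))).eval a ≠ 0 := by
    rw [Polynomial.eval_prod]
    apply Finset.prod_ne_zero_iff.mpr
    intro i hi
    simp only [hI, Finset.mem_filter] at hi
    simp only [Polynomial.eval_sub, Polynomial.eval_X, Polynomial.eval_C]
    exact sub_ne_zero.mpr (Ne.symm hi.2)
  have hqmape : (q.map (Int.castRingHom ℝ)).eval a ≠ 0 := by
    have : (q.map (Int.castRingHom ℝ)).eval a = ((q.eval (-c) : ℤ) : ℝ) := by
      rw [ha, show -(c : ℝ) = ((-c : ℤ) : ℝ) by push_cast; ring, Polynomial.eval_intCast_map]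
      simp
    rw [this]
    exact_mod_cast hqe
  have hXC : (X - C a) ≠ (0 : ℝ[X]) := Polynomial.X_sub_C_ne_zero a
  -- compute root multiplicities to identify the exponents
  have hcard : (Finset.univ.filter (fun i : Fin n => ¬ μ i ≠ -(c : ℝ))).card = m := by
    have h1 : Polynomial.rootMultiplicity a (∏ i : Fin n, (X - C (μ i)))
        = (Finset.univ.filter (fun i : Fin n => ¬ μ i ≠ -(c : ℝ))).card := by
      rw [hsplit, Polynomial.rootMultiplicity_mul
        (mul_ne_zero (pow_ne_zero _ hXC) (fun h => hIne (by rw [h]; simp))),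
        Polynomial.rootMultiplicity_X_sub_C_pow,
        Polynomial.rootMultiplicity_eq_zero hIne, add_zero]
    have h2 : Polynomial.rootMultiplicity a (∏ i : Fin n, (X - C (μ i))) = m := by
      rw [hqmap, Polynomial.rootMultiplicity_mul
        (mul_ne_zero (pow_ne_zero _ hXC) (fun h => hqmape (by rw [h]; simp))),
        Polynomial.rootMultiplicity_X_sub_C_pow,
        Polynomial.rootMultiplicity_eq_zero hqmape, add_zero]
    rw [← h1, h2]
  have hcancel : (∏ i ∈ I, (X - C (μ i))) = q.map (Int.castRingHom ℝ) := by
    apply mul_left_cancel₀ (pow_ne_zero m hXC)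
    rw [← hqmap, hsplit, hcard]
  have heval : (∏ i ∈ I, (a - μ i)) = ((q.eval (-c) : ℤ) : ℝ) := by
    have := congrArg (Polynomial.eval a) hcancel
    rw [Polynomial.eval_prod] at this
    simp only [Polynomial.eval_sub, Polynomial.eval_X, Polynomial.eval_C] at this
    rw [this, ha, show -(c : ℝ) = ((-c : ℤ) : ℝ) by push_cast; ring,
      Polynomial.eval_intCast_map]
    simp
  have hprod : (∏ i ∈ I, ((c : ℝ) + μ i)) = ((-1 : ℤ) ^ I.card * q.eval (-c) : ℤ) := by
    have : (∏ i ∈ I, ((c : ℝ) + μ i)) = ∏ i ∈ I, (-(a - μ i)) := by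
      apply Finset.prod_congr rfl; intro i _; rw [ha]; ring
    have h2 : (∏ i ∈ I, (-(a - μ i))) = (-1 : ℝ) ^ I.card * ∏ i ∈ I, (a - μ i) := by
      rw [← Finset.prod_const, ← Finset.prod_mul_distrib]
      exact Finset.prod_congr rfl (fun i _ => by ring)
    rw [this, h2, heval]
    push_cast
    ring
  refine ⟨⟨(-1 : ℤ) ^ I.card * q.eval (-c), ?_, hprod.symm⟩, ?_⟩
  · exact mul_ne_zero (pow_ne_zero _ (by norm_num)) hqe
  · have h1 : (∏ i ∈ I, |(c : ℝ) + μ i|) = |∏ i ∈ I, ((c : ℝ) + μ i)| :=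
      (Finset.abs_prod I _).symm
    rw [h1, hprod]
    have : (1 : ℤ) ≤ |(-1 : ℤ) ^ I.card * q.eval (-c)| :=
      Int.one_le_abs (mul_ne_zero (pow_ne_zero _ (by norm_num)) hqe)
    calc (1 : ℝ) ≤ ((|(-1 : ℤ) ^ I.card * q.eval (-c)| : ℤ) : ℝ) := by exact_mod_cast this
      _ = |(((-1 : ℤ) ^ I.card * q.eval (-c) : ℤ) : ℝ)| := by push_cast; ring
end

section
/- Let d ≥ 3 be an integer, set ε₀ = √(d−1) and α = (d² + 2dε₀ + 2ε₀²)/(d + 2ε₀), and define f(x) = (α − x)(x + ε₀)²(x + d). Then f(ε₀) = f(d), α > d, f(x) ≥ 0 for all x ∈ [−d, d], and f(x) > f(d) for all x ∈ (ε₀, d). -/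
/-!
Nothing about `ε₀ = √(d - 1)` is special: for any `0 < e < D`, the value
`α = (D² + 2De + 2e²)/(D + 2e)` is exactly the one making the quartic
`f x = (α - x)(x + e)²(x + D)` take equal values at `e` and `D`, since
`(D + 2e)(f x - f D) = (x - e)(D - x) Q(x)` with a quadratic `Q` whose coefficients are
positive. Hence `f > f D` strictly between `e` and `D`, while `α - D = 2e²/(D + 2e) > 0`
makes every factor of `f` nonnegative on `[-D, D]`.
-/

namespace MagicPolynomial

variable (e D : ℝ)

noncomputable def alpha : ℝ := (D ^ 2 + 2 * D * e + 2 * e ^ 2) / (D + 2 * e)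

noncomputable def poly (x : ℝ) : ℝ := (alpha e D - x) * (x + e) ^ 2 * (x + D)

variable {e D}

theorem alpha_sub_right (h : D + 2 * e ≠ 0) : alpha e D - D = 2 * e ^ 2 / (D + 2 * e) := by
  rw [alpha]
  field_simp
  ring

theorem lt_alpha (he : e ≠ 0) (h : 0 < D + 2 * e) : D < alpha e D := by
  have : 0 < alpha e D - D := by
    rw [alpha_sub_right h.ne']
    positivity
  linarith

theorem mul_poly_sub_poly_right (h : D + 2 * e ≠ 0) (x : ℝ) :
    (D + 2 * e) * (poly e D x - poly e D D) =
      (x - e) * (D - x) *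
        ((D + 2 * e) * x ^ 2 + (D + e) * (D + 4 * e) * x
          + e * (3 * D ^ 2 + 6 * D * e + 2 * e ^ 2)) := by
  rw [poly, poly, alpha]
  field_simp
  ring

theorem poly_left_eq_poly_right (h : D + 2 * e ≠ 0) : poly e D e = poly e D D := by
  have := mul_poly_sub_poly_right h e
  rw [sub_self, zero_mul, zero_mul, mul_eq_zero, sub_eq_zero] at this
  exact this.resolve_left h

theorem poly_nonneg_of_mem_Icc (hα : D ≤ alpha e D) {x : ℝ} (hx : x ∈ Set.Icc (-D) D) :
    0 ≤ poly e D x := by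
  have hαx : 0 ≤ alpha e D - x := by linarith [hx.2]
  have hxD : 0 ≤ x + D := by linarith [hx.1]
  rw [poly]
  positivity

theorem poly_right_lt_of_mem_Ioo (he : 0 < e) {x : ℝ} (hx : x ∈ Set.Ioo e D) :
    poly e D D < poly e D x := by
  obtain ⟨hex, hxD⟩ := hx
  have hx0 : 0 < x := he.trans hex
  have hD0 : 0 < D := hx0.trans hxD
  have hD : 0 < D + 2 * e := by linarith
  have hQ : 0 < (D + 2 * e) * x ^ 2 + (D + e) * (D + 4 * e) * x
      + e * (3 * D ^ 2 + 6 * D * e + 2 * e ^ 2) := by positivity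
  have hprod := mul_poly_sub_poly_right hD.ne' x
  have : 0 < (D + 2 * e) * (poly e D x - poly e D D) := by
    rw [hprod]
    exact mul_pos (mul_pos (by linarith) (by linarith)) hQ
  linarith [pos_of_mul_pos_right this hD.le]

end MagicPolynomial

open MagicPolynomial in
/-- Let `d ≥ 3` be an integer, set `ε₀ = √(d−1)` and
`α = (d² + 2dε₀ + 2ε₀²)/(d + 2ε₀)`, and define `f x = (α − x)(x + ε₀)²(x + d)`.
Then `f ε₀ = f d`, `α > d`, `f x ≥ 0` for all `x ∈ [−d, d]`, and `f x > f d` for all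
`x ∈ (ε₀, d)`. -/
theorem magic_polynomial_properties
    (d : ℕ) (hd : 3 ≤ d)
    (ε₀ α : ℝ) (hε₀ : ε₀ = Real.sqrt ((d : ℝ) - 1))
    (hα : α = ((d : ℝ) ^ 2 + 2 * (d : ℝ) * ε₀ + 2 * ε₀ ^ 2) / ((d : ℝ) + 2 * ε₀))
    (f : ℝ → ℝ) (hf : ∀ x : ℝ, f x = (α - x) * (x + ε₀) ^ 2 * (x + (d : ℝ))) :
    f ε₀ = f (d : ℝ) ∧
      (d : ℝ) < α ∧
      (∀ x ∈ Set.Icc (-(d : ℝ)) (d : ℝ), 0 ≤ f x) ∧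
      (∀ x ∈ Set.Ioo ε₀ (d : ℝ), f (d : ℝ) < f x) := by
  have hd1 : (0 : ℝ) < d - 1 := by
    have : (3 : ℝ) ≤ d := by exact_mod_cast hd
    linarith
  have hε₀_pos : 0 < ε₀ := hε₀ ▸ Real.sqrt_pos.mpr hd1
  have hsum : 0 < (d : ℝ) + 2 * ε₀ := by positivity
  obtain rfl : α = alpha ε₀ d := hα
  obtain rfl : f = poly ε₀ d := funext fun x => hf x
  have hαd := lt_alpha hε₀_pos.ne' hsum
  exact ⟨poly_left_eq_poly_right hsum.ne', hαd,
    fun x hx => poly_nonneg_of_mem_Icc hαd.le hx, fun x hx => poly_right_lt_of_mem_Ioo hε₀_pos hx⟩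
end
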